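/- Consider a single plant x' = A x + B u + E υ with measured output y = C x + D u + F υ, exosystem υ' = S υ, and regulated error e = C_e x + D_e u + F_e υ, where all matrices are real and of compatible dimensions. Assume there exist Π, Γ with Π S = A Π + B Γ + E and 0 = C_e Π + D_e Γ + F_e. Apply the observer-based controller u = K(x̂ − Π υ̂) + Γ υ̂, x̂' = A x̂ + E υ̂ + B u + L₁(ŷ − y), υ̂' = S υ̂ + L₂(ŷ − y), ŷ = C x̂ + F υ̂ + D u, where the gains satisfy: A + B K is Hurwitz and [[A + L₁ C, E + L₁ F],[L₂ C, S + L₂ F]] is Hurwitz. Then for every differentiable solution (x, υ, x̂, υ̂) of the closed-loop system and arbitrary initial conditions, e(t) → 0 as t → ∞. -/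

import Mathlib

/-!
The estimation error `(x̂ - x, υ̂ - υ)` solves the autonomous system driven by the observer block
matrix, so it decays. The control then reads `u = Γ υ + K (x - Π υ) + w` with `w` linear in the
estimation error, and the regulator equations turn the tracking error `z = x - Π υ` into a
solution of `z' = (A + B K) z + B w` and the regulated error into `(Cₑ + Dₑ K) z + Dₑ w`.
Hurwitz systems are input-to-state stable: by Cayley–Hamilton a complex Hurwitz matrix is
annihilated by a product of factors `M - μ` with `Re μ < 0`, and peeling them off one at a time
reduces the claim to the scalar equation `u' = μ u + g`, solved with an integrating factor.
-/

open scoped Matrix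
open Filter Topology

theorem HasDerivAt.matrix_mulVec {𝕜 : Type*} [RCLike 𝕜] {m n : Type*} [Fintype m] [Fintype n]
    (N : Matrix m n 𝕜) {u : ℝ → n → 𝕜} {d : n → 𝕜} {t : ℝ}
    (h : HasDerivAt u d t) : HasDerivAt (fun s => N *ᵥ u s) (N *ᵥ d) t :=
  (LinearMap.toContinuousLinearMap N.mulVecLin).restrictScalars ℝ |>.hasFDerivAt.comp_hasDerivAt t h

theorem Filter.Tendsto.matrix_mulVec {R α : Type*} [TopologicalSpace R]
    [NonUnitalNonAssocSemiring R] [IsTopologicalSemiring R] {m n : Type*} [Fintype n]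
    (N : Matrix m n R) {u : α → n → R} {l : Filter α} {v : n → R} (h : Tendsto u l (𝓝 v)) :
    Tendsto (fun s => N *ᵥ u s) l (𝓝 (N *ᵥ v)) :=
  ((continuous_const.matrix_mulVec continuous_id).tendsto v).comp h

theorem tendsto_sumElim_nhds_iff {α a b X : Type*} [TopologicalSpace X] {f : α → a → X}
    {g : α → b → X} {l : Filter α} {v : a → X} {w : b → X} :
    Tendsto (fun s => Sum.elim (f s) (g s)) l (𝓝 (Sum.elim v w)) ↔
      Tendsto f l (𝓝 v) ∧ Tendsto g l (𝓝 w) := by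
  simp only [tendsto_pi_nhds, Sum.forall, Sum.elim_inl, Sum.elim_inr]

theorem HasDerivAt.sumElim {𝕜 F : Type*} [NontriviallyNormedField 𝕜] [NormedAddCommGroup F]
    [NormedSpace 𝕜 F] {a b : Type*} [Fintype a] [Fintype b] {f : 𝕜 → a → F} {g : 𝕜 → b → F}
    {f' : a → F} {g' : b → F} {t : 𝕜} (hf : HasDerivAt f f' t) (hg : HasDerivAt g g' t) :
    HasDerivAt (fun s => Sum.elim (f s) (g s)) (Sum.elim f' g') t := by
  rw [hasDerivAt_pi] at hf hg ⊢
  rintro (i | i)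
  exacts [hf i, hg i]

section ScalarDecay

variable {E : Type*} [NormedAddCommGroup E] [NormedSpace ℂ E]

theorem norm_cexp_neg_mul_ofReal (μ : ℂ) (s : ℝ) :
    ‖Complex.exp (-μ * s)‖ = Real.exp (-μ.re * s) := by
  rw [Complex.norm_exp]
  simp

theorem norm_le_of_hasDerivAt_smul_add {μ : ℂ} (hμ : μ.re < 0) {u g : ℝ → E} {T c : ℝ}
    (hu : ∀ t, T ≤ t → HasDerivAt u (μ • u t + g t) t) (hg : ∀ t, T ≤ t → ‖g t‖ ≤ c) :
    ∀ t, T ≤ t → ‖u t‖ ≤ Real.exp (μ.re * (t - T)) * ‖u T‖ + c / -μ.re := by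
  set α := -μ.re
  have hα : 0 < α := neg_pos.mpr hμ
  -- integrating factor
  set w : ℝ → E := fun s => Complex.exp (-μ * (s - T : ℝ)) • u s
  have hw : ∀ s, T ≤ s → HasDerivAt w (Complex.exp (-μ * (s - T : ℝ)) • g s) s := by
    intro s hs
    have hexp : HasDerivAt (fun r : ℝ => Complex.exp (-μ * (r - T : ℝ)))
        (Complex.exp (-μ * (s - T : ℝ)) * -μ) s := by
      have := ((hasDerivAt_id s).sub_const T).ofReal_comp.const_mul (-μ)
      simpa using this.cexp
    convert hexp.smul (hu s hs) using 1
    · rfl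
    rw [smul_add, smul_smul]
    module
  intro t ht
  have hwt : ‖w t‖ ≤ ‖u T‖ + c / α * (Real.exp (α * (t - T)) - 1) := by
    refine image_norm_le_of_norm_deriv_right_le_deriv_boundary
      (B := fun s => ‖u T‖ + c / α * (Real.exp (α * (s - T)) - 1))
      (B' := fun s => c * Real.exp (α * (s - T)))
      (fun s hs => (hw s hs.1).continuousAt.continuousWithinAt)
      (fun s hs => (hw s hs.1).hasDerivWithinAt) (by simp [w]) (fun s => ?_)
      (fun s hs => ?_) (Set.right_mem_Icc.mpr ht)
    · have := ((((hasDerivAt_id s).sub_const T).const_mul α).exp.sub_const 1).const_mul (c / α)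
      refine (this.const_add ‖u T‖).congr_deriv ?_
      field_simp
      simp
    · rw [norm_smul, norm_cexp_neg_mul_ofReal, mul_comm]
      exact mul_le_mul_of_nonneg_right (hg s hs.1) (Real.exp_pos _).le
  have hc : 0 ≤ c / α := div_nonneg ((norm_nonneg _).trans (hg T le_rfl)) hα.le
  have hinv : Real.exp (μ.re * (t - T)) * Real.exp (α * (t - T)) = 1 := by
    rw [← Real.exp_add]
    simp [α]
  calc ‖u t‖ = Real.exp (μ.re * (t - T)) * ‖w t‖ := by
        rw [norm_smul, norm_cexp_neg_mul_ofReal, ← mul_assoc, hinv, one_mul]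
    _ ≤ Real.exp (μ.re * (t - T)) * (‖u T‖ + c / α * (Real.exp (α * (t - T)) - 1)) := by
        gcongr
    _ = Real.exp (μ.re * (t - T)) * ‖u T‖ + c / α * (1 - Real.exp (μ.re * (t - T))) := by
        linear_combination (c / α) * hinv
    _ ≤ Real.exp (μ.re * (t - T)) * ‖u T‖ + c / α := by
        have := Real.exp_pos (μ.re * (t - T))
        nlinarith

theorem tendsto_zero_of_hasDerivAt_smul_add {μ : ℂ} (hμ : μ.re < 0) {u g : ℝ → E}
    (hu : ∀ t, 0 ≤ t → HasDerivAt u (μ • u t + g t) t) (hg : Tendsto g atTop (𝓝 0)) :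
    Tendsto u atTop (𝓝 0) := by
  rw [NormedAddGroup.tendsto_nhds_zero] at hg ⊢
  intro ε hε
  have hα : 0 < -μ.re := neg_pos.mpr hμ
  obtain ⟨T, hT⟩ := eventually_atTop.mp
    ((hg (ε * -μ.re / 2) (by positivity)).and (eventually_ge_atTop 0))
  have hbound := norm_le_of_hasDerivAt_smul_add hμ (fun t ht => hu t ((hT T le_rfl).2.trans ht))
    (fun t ht => (hT t ht).1.le)
  have hdecay : Tendsto (fun t => Real.exp (μ.re * (t - T)) * ‖u T‖) atTop (𝓝 0) := by
    have hlin := (tendsto_atTop_add_const_right _ (-T) tendsto_id).const_mul_atTop_of_neg hμ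
    simpa [sub_eq_add_neg] using (Real.tendsto_exp_atBot.comp hlin).mul_const ‖u T‖
  filter_upwards [hdecay.eventually_lt_const (half_pos hε), eventually_ge_atTop T] with t h1 h2
  calc ‖u t‖ ≤ Real.exp (μ.re * (t - T)) * ‖u T‖ + ε * -μ.re / 2 / -μ.re := hbound t h2
    _ < ε := by rw [mul_div_right_comm, mul_div_cancel_right₀ _ hα.ne']; linarith

end ScalarDecay

namespace Matrix

open Polynomial

variable {n : Type*} [Fintype n] [DecidableEq n]

def IsHurwitz (M : Matrix n n ℂ) : Prop :=
  ∀ μ ∈ spectrum ℂ M, μ.re < 0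

theorem tendsto_zero_of_aeval_prod_mulVec_eq_zero {M : Matrix n n ℂ}
    (s : Multiset ℂ) (hs : ∀ μ ∈ s, μ.re < 0) {u g : ℝ → n → ℂ}
    (hu : ∀ t, 0 ≤ t → HasDerivAt u (M *ᵥ u t + g t) t) (hg : Tendsto g atTop (𝓝 0))
    (h0 : ∀ t, aeval M (s.map fun μ => X - C μ).prod *ᵥ u t = 0) :
    Tendsto u atTop (𝓝 0) := by
  induction s using Multiset.induction_on generalizing u g with
  | empty =>
    simp only [Multiset.map_zero, Multiset.prod_zero, map_one, one_mulVec] at h0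
    rw [show u = 0 from funext h0]
    exact tendsto_const_nhds
  | cons μ s ih =>
    set P := M - μ • 1
    have hP : aeval M (X - C μ) = P := by simp [P, Algebra.algebraMap_eq_smul_one]
    have hMP : M * P = P * M := by simp [P, sub_mul, mul_sub]
    have hv : Tendsto (fun t => P *ᵥ u t) atTop (𝓝 0) := by
      refine ih (fun ν hν => hs ν (Multiset.mem_cons_of_mem hν)) (g := fun t => P *ᵥ g t)
        (fun t ht => ((hu t ht).matrix_mulVec P).congr_deriv ?_) (by simpa using hg.matrix_mulVec P)
        (fun t => ?_)
      · rw [mulVec_add, mulVec_mulVec, mulVec_mulVec, hMP]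
      · rw [mulVec_mulVec, ← hP, ← map_mul, ← h0 t, Multiset.map_cons, Multiset.prod_cons, mul_comm]
    have hMu : ∀ t, M *ᵥ u t = μ • u t + P *ᵥ u t := fun t => by
      simp [P, sub_mulVec, smul_mulVec]
    refine tendsto_zero_of_hasDerivAt_smul_add (hs μ (Multiset.mem_cons_self μ s))
      (fun t ht => (hu t ht).congr_deriv ?_) (by simpa using hv.add hg)
    rw [hMu, add_assoc]

theorem IsHurwitz.tendsto_zero_of_hasDerivAt {M : Matrix n n ℂ} (hM : M.IsHurwitz)
    {u g : ℝ → n → ℂ} (hu : ∀ t, 0 ≤ t → HasDerivAt u (M *ᵥ u t + g t) t)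
    (hg : Tendsto g atTop (𝓝 0)) : Tendsto u atTop (𝓝 0) := by
  refine tendsto_zero_of_aeval_prod_mulVec_eq_zero M.charpoly.roots
    (fun μ hμ => hM μ (mem_spectrum_of_isRoot_charpoly (isRoot_of_mem_roots hμ))) hu hg
    (fun t => ?_)
  rw [← (IsAlgClosed.splits _).eq_prod_roots_of_monic M.charpoly_monic, aeval_self_charpoly,
    zero_mulVec]

theorem IsHurwitz.tendsto_zero_of_hasDerivAt_real {M : Matrix n n ℝ}
    (hM : (M.map ((↑) : ℝ → ℂ)).IsHurwitz) {w f : ℝ → n → ℝ}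
    (hw : ∀ t, 0 ≤ t → HasDerivAt w (M *ᵥ w t + f t) t) (hf : Tendsto f atTop (𝓝 0)) :
    Tendsto w atTop (𝓝 0) := by
  set ofReal : (n → ℝ) →L[ℝ] (n → ℂ) :=
    ContinuousLinearMap.pi fun i => Complex.ofRealCLM.comp (ContinuousLinearMap.proj i)
  have hofReal : ∀ v, M.map (↑) *ᵥ ofReal v = ofReal (M *ᵥ v) := fun v => by
    ext i
    exact (Complex.ofRealHom.map_mulVec M v i).symm
  have hu : Tendsto (fun t => ofReal (w t)) atTop (𝓝 0) := by
    refine hM.tendsto_zero_of_hasDerivAt (g := fun t => ofReal (f t))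
      (fun t ht => (ofReal.hasFDerivAt.comp_hasDerivAt t (hw t ht)).congr_deriv ?_) ?_
    · rw [map_add, hofReal]
    · simpa only [map_zero, Function.comp_def] using (ofReal.continuous.tendsto 0).comp hf
  set re : (n → ℂ) →L[ℝ] (n → ℝ) :=
    ContinuousLinearMap.pi fun i => Complex.reCLM.comp (ContinuousLinearMap.proj i)
  have hre : ∀ v, re (ofReal v) = v := fun v => by ext; simp [re, ofReal]
  simpa only [map_zero, Function.comp_def, hre] using (re.continuous.tendsto 0).comp hu

end Matrix

section ObserverBasedRegulation

open Matrix

variable {n m q r : Type*} [Fintype n] [Fintype q]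
  {A : Matrix n n ℝ} {B : Matrix n m ℝ} {C : Matrix r n ℝ} {D : Matrix r m ℝ}
  {E : Matrix n q ℝ} {F : Matrix r q ℝ} {S : Matrix q q ℝ} {P : Matrix n q ℝ}
  {Γ : Matrix m q ℝ} {K : Matrix m n ℝ} {L₁ : Matrix n r ℝ} {L₂ : Matrix q r ℝ}

theorem observerControl_eq (x xh : n → ℝ) (υ υh : q → ℝ) :
    K *ᵥ (xh - P *ᵥ υh) + Γ *ᵥ υh =
      Γ *ᵥ υ + K *ᵥ (x - P *ᵥ υ) + (K *ᵥ (xh - x) + (Γ - K * P) *ᵥ (υh - υ)) := by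
  simp only [sub_mulVec, mulVec_sub, ← mulVec_mulVec]
  abel

variable [Fintype m] [Fintype r]

theorem hasDerivAt_observerError {x xh : ℝ → n → ℝ} {υ υh : ℝ → q → ℝ} {u : m → ℝ}
    {y yh : r → ℝ} {t : ℝ}
    (hy : y = C *ᵥ x t + D *ᵥ u + F *ᵥ υ t) (hyh : yh = C *ᵥ xh t + F *ᵥ υh t + D *ᵥ u)
    (hυ : HasDerivAt υ (S *ᵥ υ t) t) (hx : HasDerivAt x (A *ᵥ x t + B *ᵥ u + E *ᵥ υ t) t)
    (hxh : HasDerivAt xh (A *ᵥ xh t + E *ᵥ υh t + B *ᵥ u + L₁ *ᵥ (yh - y)) t)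
    (hυh : HasDerivAt υh (S *ᵥ υh t + L₂ *ᵥ (yh - y)) t) :
    HasDerivAt (fun s => Sum.elim (xh s - x s) (υh s - υ s))
      (fromBlocks (A + L₁ * C) (E + L₁ * F) (L₂ * C) (S + L₂ * F) *ᵥ
        Sum.elim (xh t - x t) (υh t - υ t)) t := by
  have hinnov : yh - y = C *ᵥ (xh t - x t) + F *ᵥ (υh t - υ t) := by
    rw [hy, hyh, mulVec_sub, mulVec_sub]
    abel
  refine ((hxh.sub hx).sumElim (hυh.sub hυ)).congr_deriv ?_
  rw [fromBlocks_mulVec, Sum.elim_comp_inl, Sum.elim_comp_inr, hinnov]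
  congr 1 <;>
  · simp only [add_mulVec, mulVec_add, mulVec_sub, ← mulVec_mulVec]
    abel

theorem hasDerivAt_trackingError (hreg : P * S = A * P + B * Γ + E) {x : ℝ → n → ℝ}
    {υ : ℝ → q → ℝ} {u w : m → ℝ} {t : ℝ}
    (hυ : HasDerivAt υ (S *ᵥ υ t) t) (hx : HasDerivAt x (A *ᵥ x t + B *ᵥ u + E *ᵥ υ t) t)
    (hu : u = Γ *ᵥ υ t + K *ᵥ (x t - P *ᵥ υ t) + w) :
    HasDerivAt (fun s => x s - P *ᵥ υ s) ((A + B * K) *ᵥ (x t - P *ᵥ υ t) + B *ᵥ w) t := by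
  refine (hx.sub (hυ.matrix_mulVec P)).congr_deriv ?_
  rw [mulVec_mulVec, hreg, hu]
  simp only [add_mulVec, mulVec_add, mulVec_sub, ← mulVec_mulVec]
  abel

theorem regulatedError_eq {p : Type*} {Ce : Matrix p n ℝ} {De : Matrix p m ℝ}
    {Fe : Matrix p q ℝ} (hreg : 0 = Ce * P + De * Γ + Fe) {x : n → ℝ} {υ : q → ℝ} {u w : m → ℝ}
    (hu : u = Γ *ᵥ υ + K *ᵥ (x - P *ᵥ υ) + w) :
    Ce *ᵥ x + De *ᵥ u + Fe *ᵥ υ = (Ce + De * K) *ᵥ (x - P *ᵥ υ) + De *ᵥ w := by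
  rw [eq_neg_of_add_eq_zero_right hreg.symm, hu]
  simp only [add_mulVec, neg_mulVec, mulVec_add, mulVec_sub, ← mulVec_mulVec]
  abel

end ObserverBasedRegulation

/-- classical observer-based output regulation for a single linear plant with
exosystem `υ' = S υ`: under the regulator equations and Hurwitz gain conditions, the regulated
error `e = Cₑ x + Dₑ u + Fₑ υ` converges to zero for every solution. -/
theorem single_plant_output_regulation
    {Nx Nu q r pe : ℕ}
    (A : Matrix (Fin Nx) (Fin Nx) ℝ) (B : Matrix (Fin Nx) (Fin Nu) ℝ)
    (C : Matrix (Fin r) (Fin Nx) ℝ) (D : Matrix (Fin r) (Fin Nu) ℝ)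
    (E : Matrix (Fin Nx) (Fin q) ℝ) (F : Matrix (Fin r) (Fin q) ℝ)
    (S : Matrix (Fin q) (Fin q) ℝ)
    (Ce : Matrix (Fin pe) (Fin Nx) ℝ) (De : Matrix (Fin pe) (Fin Nu) ℝ)
    (Fe : Matrix (Fin pe) (Fin q) ℝ)
    (Pmat : Matrix (Fin Nx) (Fin q) ℝ) (Γ : Matrix (Fin Nu) (Fin q) ℝ)
    (K : Matrix (Fin Nu) (Fin Nx) ℝ)
    (L₁ : Matrix (Fin Nx) (Fin r) ℝ) (L₂ : Matrix (Fin q) (Fin r) ℝ)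
    (hreg1 : Pmat * S = A * Pmat + B * Γ + E)
    (hreg2 : 0 = Ce * Pmat + De * Γ + Fe)
    (hK : ∀ μ ∈ spectrum ℂ ((A + B * K).map (fun v : ℝ => (v : ℂ))), μ.re < 0)
    (hL : ∀ μ ∈ spectrum ℂ ((Matrix.fromBlocks (A + L₁ * C) (E + L₁ * F)
        (L₂ * C) (S + L₂ * F)).map (fun v : ℝ => (v : ℂ))), μ.re < 0)
    (x xh : ℝ → Fin Nx → ℝ) (υ υh : ℝ → Fin q → ℝ)
    (u : ℝ → Fin Nu → ℝ) (y yh : ℝ → Fin r → ℝ)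
    (hu : ∀ t : ℝ, u t = K.mulVec (xh t - Pmat.mulVec (υh t)) + Γ.mulVec (υh t))
    (hy : ∀ t : ℝ, y t = C.mulVec (x t) + D.mulVec (u t) + F.mulVec (υ t))
    (hyh : ∀ t : ℝ, yh t = C.mulVec (xh t) + F.mulVec (υh t) + D.mulVec (u t))
    (hυ : ∀ t : ℝ, 0 ≤ t → HasDerivAt υ (S.mulVec (υ t)) t)
    (hx : ∀ t : ℝ, 0 ≤ t →
      HasDerivAt x (A.mulVec (x t) + B.mulVec (u t) + E.mulVec (υ t)) t)
    (hxh : ∀ t : ℝ, 0 ≤ t →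
      HasDerivAt xh (A.mulVec (xh t) + E.mulVec (υh t) + B.mulVec (u t)
        + L₁.mulVec (yh t - y t)) t)
    (hυh : ∀ t : ℝ, 0 ≤ t →
      HasDerivAt υh (S.mulVec (υh t) + L₂.mulVec (yh t - y t)) t) :
    Tendsto (fun t : ℝ => Ce.mulVec (x t) + De.mulVec (u t) + Fe.mulVec (υ t))
      atTop (nhds 0) := by
  set ex := fun s => xh s - x s
  set ev := fun s => υh s - υ s
  have hobs : Tendsto (fun s => Sum.elim (ex s) (ev s)) atTop (𝓝 (Sum.elim 0 0)) := by
    rw [Sum.elim_zero_zero]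
    refine Matrix.IsHurwitz.tendsto_zero_of_hasDerivAt_real hL (f := 0) (fun t ht => ?_)
      tendsto_const_nhds
    exact (hasDerivAt_observerError (hy t) (hyh t) (hυ t ht) (hx t ht) (hxh t ht)
      (hυh t ht)).congr_deriv (add_zero _).symm
  obtain ⟨hex, hev⟩ := tendsto_sumElim_nhds_iff.mp hobs
  set w := fun s => K *ᵥ ex s + (Γ - K * Pmat) *ᵥ ev s
  have hw : Tendsto w atTop (𝓝 0) := by
    simpa using (hex.matrix_mulVec K).add (hev.matrix_mulVec (Γ - K * Pmat))
  have hcontrol (t : ℝ) : u t = Γ *ᵥ υ t + K *ᵥ (x t - Pmat *ᵥ υ t) + w t :=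
    (hu t).trans (observerControl_eq _ _ _ _)
  have htrack : Tendsto (fun s => x s - Pmat *ᵥ υ s) atTop (𝓝 0) :=
    Matrix.IsHurwitz.tendsto_zero_of_hasDerivAt_real hK
      (fun t ht => hasDerivAt_trackingError hreg1 (hυ t ht) (hx t ht) (hcontrol t))
      (by simpa using hw.matrix_mulVec B)
  simp_rw [regulatedError_eq hreg2 (hcontrol _)]
  simpa using (htrack.matrix_mulVec (Ce + De * K)).add (hw.matrix_mulVec De)
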